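/- Suppose P(z) = Σ_{k=−r}^{r} p(k) z^{−k} is a Laurent polynomial with real coefficients satisfying P(z) ≥ 0 for all z on the unit circle 𝕋. Then there exists a polynomial Q(z) = Σ_{k=0}^{r} q(k) z^{−k} such that P(z) = |Q(z)|² = Q(z) Q(z⁻¹)* for all z ∈ 𝕋 (Fejér–Riesz). -/

import Mathlib

/-!
Put `A(z) = zʳ P(z)`, a polynomial of degree at most `2r` such that `z⁻ʳ A(z) ≥ 0` on the unit
circle. Realness on the circle makes `A` self-reciprocal, `A(z) = z²ʳ conj (A (1 / conj z))`, so
with every root `w` it also vanishes at `1 / conj w`; a root on the circle is double, because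
there `z⁻ʳ A(z)` attains its minimum `0`. Hence `(X - w)(1 - conj w X)` divides `A`. On the circle
this factor equals `z |z - w|²`, so the quotient satisfies the same hypothesis with `r - 1`, and
induction on `r` writes `z⁻ʳ A(z) = |Q(z)|²` with `Q = c ∏ (X - wᵢ)` of degree at most `r`.
-/

open Complex Polynomial ComplexConjugate Topology
open scoped ComplexOrder

instance Circle.instNontrivial : Nontrivial Circle :=
  ⟨⟨1, -1, fun h => by have := congrArg ((↑) : Circle → ℂ) h; norm_num at this⟩⟩

theorem IsClosed.apply_mem_of_forall_ne {X Y : Type*} [TopologicalSpace X] [TopologicalSpace Y]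
    {S : Set Y} (hS : IsClosed S) {x : X} [(𝓝[≠] x).NeBot] {f : X → Y} (hf : Continuous f)
    (h : ∀ y ≠ x, f y ∈ S) : f x ∈ S := by
  have : closure {x}ᶜ ⊆ f ⁻¹' S := closure_minimal h (hS.preimage hf)
  exact this (by simp)

theorem HasDerivAt.eq_zero_of_nonneg {f : ℝ → ℂ} {f' : ℂ} {x : ℝ} (hf : HasDerivAt f f' x)
    (hf_nonneg : ∀ y, 0 ≤ f y) (hfx : f x = 0) : f' = 0 := by
  have hmin : IsLocalMin (fun y => (f y).re) x :=
    .of_forall fun y => by simpa [hfx] using (nonneg_iff.1 (hf_nonneg y)).1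
  have him : (fun y => (f y).im) = fun _ => 0 := funext fun y => (nonneg_iff.1 (hf_nonneg y)).2.symm
  refine Complex.ext ?_ ?_
  · exact hmin.hasDerivAt_eq_zero (reCLM.hasFDerivAt.comp_hasDerivAt x hf)
  · have := imCLM.hasFDerivAt.comp_hasDerivAt x hf
    exact this.unique (by simpa [Function.comp_def, him] using hasDerivAt_const x (0 : ℝ))

theorem Polynomial.eval_reflect {K : Type*} [Field K] {f : K[X]} {N : ℕ} (hf : f.natDegree ≤ N)
    {z : K} (hz : z ≠ 0) : (reflect N f).eval z = z ^ N * f.eval z⁻¹ := by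
  let := invertibleOfNonzero (inv_ne_zero hz)
  have := eval₂_reflect_mul_pow (RingHom.id K) z⁻¹ N f hf
  simp only [eval₂_id, invOf_eq_inv, inv_inv] at this
  rw [← this, inv_pow, mul_left_comm, mul_inv_cancel₀ (pow_ne_zero _ hz), mul_one]

theorem Polynomial.eq_of_eval_eq_on_circle {p q : ℂ[X]}
    (h : ∀ z : ℂ, ‖z‖ = 1 → p.eval z = q.eval z) : p = q := by
  have : Infinite Circle := PreconnectedSpace.infinite
  exact eq_of_infinite_eval_eq p q (Set.infinite_of_injective_forall_mem (α := Circle)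
    Circle.coe_injective fun z => h z (Circle.norm_coe z))

theorem Polynomial.one_sub_C_conj_mul_X_dvd {A : ℂ[X]} {N : ℕ}
    (hA : reflect N (A.map (starRingEnd ℂ)) = A) (hdeg : A.natDegree ≤ N) {w : ℂ}
    (hw : A.IsRoot w) : 1 - C (conj w) * X ∣ A := by
  obtain ⟨G, rfl⟩ := dvd_iff_isRoot.2 hw
  rcases eq_or_ne G 0 with rfl | hG
  · simp
  rw [natDegree_mul (X_sub_C_ne_zero w) hG, natDegree_X_sub_C] at hdeg
  obtain ⟨M, rfl⟩ : ∃ M, N = 1 + M := ⟨N - 1, by omega⟩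
  rw [← hA, Polynomial.map_mul, reflect_mul _ _ (natDegree_map_le.trans (natDegree_X_sub_C_le _))
    (natDegree_map_le.trans (by omega))]
  exact dvd_mul_of_dvd_left (by simp [reflect_sub, reflect_C]) _

theorem ne_zero_of_norm_eq_one {z : ℂ} (hz : ‖z‖ = 1) : z ≠ 0 := by
  rintro rfl; simp at hz

/-- `0 ≤` is the order of `ComplexOrder`: `z⁻ⁿ A(z)` is a nonnegative real on the unit circle. -/
def NonnegOnCircle (n : ℕ) (A : ℂ[X]) : Prop :=
  ∀ z : ℂ, ‖z‖ = 1 → 0 ≤ A.eval z / z ^ n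

/-- The factor of `A` contributed by a root `w` together with its reflection `1 / conj w`. -/
noncomputable def circleFactor (w : ℂ) : ℂ[X] := (X - C w) * (1 - C (conj w) * X)

theorem eval_circleFactor_div {z : ℂ} (hz : ‖z‖ = 1) (w : ℂ) :
    (circleFactor w).eval z / z = normSq (z - w) := by
  have hz0 := ne_zero_of_norm_eq_one hz
  rw [← mul_conj, map_sub, ← inv_eq_conj hz]
  simp only [circleFactor, eval_mul, eval_sub, eval_X, eval_C, eval_one]
  field_simp

theorem circleFactor_zero : circleFactor 0 = X := by simp [circleFactor]

theorem natDegree_circleFactor {w : ℂ} (hw : w ≠ 0) : (circleFactor w).natDegree = 2 := by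
  have h : (1 - C (conj w) * X).natDegree = 1 := by
    rw [show 1 - C (conj w) * X = C (-conj w) * X + C 1 by simp only [map_neg, neg_mul, map_one]; ring]
    exact natDegree_linear (by simpa using hw)
  rw [circleFactor, natDegree_mul (X_sub_C_ne_zero w) (by rintro h'; simp [h'] at h),
    natDegree_X_sub_C, h]

namespace NonnegOnCircle

variable {n : ℕ} {A : ℂ[X]}

theorem reflect_map_conj (hA : NonnegOnCircle n A) (hdeg : A.natDegree ≤ 2 * n) :
    reflect (2 * n) (A.map (starRingEnd ℂ)) = A := by
  refine eq_of_eval_eq_on_circle fun z hz => ?_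
  have hz0 := ne_zero_of_norm_eq_one hz
  have hreal : conj (A.eval z / z ^ n) = A.eval z / z ^ n :=
    conj_eq_iff_im.2 (nonneg_iff.1 (hA z hz)).2.symm
  rw [map_div₀, map_pow, ← inv_eq_conj hz, inv_pow, div_inv_eq_mul,
    eq_div_iff (pow_ne_zero _ hz0)] at hreal
  rw [eval_reflect (natDegree_map_le.trans hdeg) hz0, inv_eq_conj hz, eval_map_apply]
  rw [two_mul, pow_add]
  linear_combination hreal

theorem coeff_two_mul (hA : NonnegOnCircle n A) (hdeg : A.natDegree ≤ 2 * n) :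
    A.coeff (2 * n) = conj (A.coeff 0) := by
  conv_lhs => rw [← hA.reflect_map_conj hdeg]
  simp [coeff_reflect, revAt_le]

theorem exists_isRoot (hA : NonnegOnCircle n A) (hdeg : A.natDegree ≤ 2 * n) (hA0 : A ≠ 0)
    (hn : n ≠ 0) : ∃ w, A.IsRoot w := by
  by_cases h0 : A.coeff 0 = 0
  · exact ⟨0, by simpa [coeff_zero_eq_eval_zero] using h0⟩
  apply Complex.exists_root
  have htop : A.coeff (2 * n) ≠ 0 := by simpa [hA.coeff_two_mul hdeg] using h0
  have := le_natDegree_of_ne_zero htop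
  rw [degree_eq_natDegree hA0]
  exact_mod_cast (by omega : 0 < A.natDegree)

theorem isRoot_derivative (hA : NonnegOnCircle n A) {w : ℂ} (hw : ‖w‖ = 1)
    (hroot : A.IsRoot w) : A.derivative.IsRoot w := by
  have hw0 := ne_zero_of_norm_eq_one hw
  -- `θ ↦ A(w e^{iθ}) / (w e^{iθ})ⁿ` is nonnegative and vanishes at `0`, so its derivative does.
  set γ : ℂ → ℂ := fun u => w * exp (u * I)
  have hγ : HasDerivAt γ (w * I) 0 := by
    simpa using (((hasDerivAt_id (0 : ℂ)).mul_const I).cexp.const_mul w)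
  have hF : HasDerivAt (fun u => A.eval (γ u) / γ u ^ n)
      (A.derivative.eval w * (w * I) / w ^ n) 0 := by
    refine (((A.hasDerivAt (γ 0)).comp 0 hγ).div (hγ.pow n) (by simp [γ, hw0])).congr_deriv ?_
    simp only [γ, zero_mul, exp_zero, mul_one, Pi.pow_apply, Function.comp_apply,
      hroot.eq_zero, sub_zero]
    field_simp
  have := hF.comp_ofReal.eq_zero_of_nonneg
    (fun θ => hA _ (by simp [γ, hw, norm_exp_ofReal_mul_I])) (by simp [γ, hroot.eq_zero])
  simpa [hw0, I_ne_zero] using this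

theorem circleFactor_dvd (hA : NonnegOnCircle n A) (hdeg : A.natDegree ≤ 2 * n) {w : ℂ}
    (hroot : A.IsRoot w) : circleFactor w ∣ A := by
  have hconj := one_sub_C_conj_mul_X_dvd (hA.reflect_map_conj hdeg) hdeg hroot
  by_cases hw : ‖w‖ = 1
  · rcases eq_or_ne A 0 with rfl | hA0
    · simp
    have hsq : (X - C w) ^ 2 ∣ A := (le_rootMultiplicity_iff hA0).1
      ((one_lt_rootMultiplicity_iff_isRoot hA0).2 ⟨hroot, hA.isRoot_derivative hw hroot⟩)
    have hww : conj w * w = 1 := by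
      rw [mul_comm, mul_conj, normSq_eq_norm_sq, hw]; norm_num
    have : circleFactor w = C (-conj w) * (X - C w) ^ 2 := by
      rw [circleFactor, ← C_1, ← hww]
      simp only [C_mul, C_neg]
      ring
    rw [this, C_mul_dvd (by simpa using ne_zero_of_norm_eq_one hw)]
    exact hsq
  · refine IsCoprime.mul_dvd ?_ (dvd_iff_isRoot.2 hroot) hconj
    refine (irreducible_X_sub_C w).coprime_iff_not_dvd.2 fun h => hw ?_
    have := (dvd_iff_isRoot.1 h).eq_zero
    simp only [eval_sub, eval_one, eval_mul, eval_C, eval_X, mul_comm, mul_conj] at this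
    have : normSq w = 1 := by exact_mod_cast (sub_eq_zero.1 this).symm
    rw [norm_def, this, Real.sqrt_one]

theorem of_circleFactor_mul {w : ℂ} {B : ℂ[X]} (hA : NonnegOnCircle (n + 1) (circleFactor w * B)) :
    NonnegOnCircle n B := by
  have hne : ∀ z : ℂ, ‖z‖ = 1 → z ≠ w → 0 ≤ B.eval z / z ^ n := by
    intro z hz hzw
    have hz0 := ne_zero_of_norm_eq_one hz
    have hL := eval_circleFactor_div hz w
    have hLz : (circleFactor w).eval z ≠ 0 := fun h => by
      have : 0 < normSq (z - w) := normSq_pos.2 (sub_ne_zero.2 hzw)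
      rw [h, zero_div] at hL
      exact this.ne' (by exact_mod_cast hL.symm)
    have : B.eval z / z ^ n = (circleFactor w * B).eval z / z ^ (n + 1) / normSq (z - w) := by
      rw [← hL, eval_mul]
      field_simp
      ring
    rw [this]
    exact div_nonneg (hA z hz) (zero_le_real.2 (normSq_nonneg _))
  intro z hz
  rcases ne_or_eq z w with hzw | rfl
  · exact hne z hz hzw
  -- At `z = w` nonnegativity passes to the limit: no point of the circle is isolated.
  have hcont : Continuous fun u : Circle => B.eval (u : ℂ) / (u : ℂ) ^ n :=
    (B.continuous.comp continuous_subtype_val).div (continuous_subtype_val.pow n)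
      fun u => pow_ne_zero _ (Circle.coe_ne_zero u)
  obtain ⟨v, rfl⟩ : ∃ v : Circle, (v : ℂ) = z := ⟨⟨z, mem_sphere_zero_iff_norm.2 hz⟩, rfl⟩
  exact isClosed_Ici.apply_mem_of_forall_ne hcont
    fun u hu => hne u (Circle.norm_coe u) fun h => hu (Circle.ext h)

theorem natDegree_le_of_circleFactor_mul {w : ℂ} {B : ℂ[X]}
    (hA : NonnegOnCircle (n + 1) (circleFactor w * B))
    (hdeg : (circleFactor w * B).natDegree ≤ 2 * (n + 1)) : B.natDegree ≤ 2 * n := by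
  rcases eq_or_ne B 0 with rfl | hB
  · simp
  rcases eq_or_ne w 0 with rfl | hw
  · rw [circleFactor_zero] at hA hdeg
    have htop : (X * B).coeff (2 * (n + 1)) = 0 := by simp [hA.coeff_two_mul hdeg]
    have : (X * B).natDegree ≠ 2 * (n + 1) := fun h => by
      rw [← h] at htop
      exact (leadingCoeff_ne_zero.2 (mul_ne_zero X_ne_zero hB)) htop
    rw [natDegree_X_mul hB] at hdeg this
    omega
  · rw [natDegree_mul (by rintro h; simpa [h] using natDegree_circleFactor hw) hB,
      natDegree_circleFactor hw] at hdeg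
    omega

theorem exists_eq_normSq (hA : NonnegOnCircle n A) (hdeg : A.natDegree ≤ 2 * n) :
    ∃ Q : ℂ[X], Q.natDegree ≤ n ∧ ∀ z : ℂ, ‖z‖ = 1 → A.eval z / z ^ n = normSq (Q.eval z) := by
  induction n generalizing A with
  | zero =>
    obtain ⟨a, rfl⟩ : ∃ a, A = C a := ⟨_, eq_C_of_natDegree_le_zero (by omega)⟩
    obtain ⟨t, ht, rfl⟩ := RCLike.nonneg_iff_exists_ofReal.1 (by simpa using hA 1 (by simp))
    refine ⟨C (Real.sqrt t : ℂ), by simp, fun z _ => ?_⟩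
    simp [Real.mul_self_sqrt ht]
  | succ n ih =>
    rcases eq_or_ne A 0 with rfl | hA0
    · exact ⟨0, by simp, by simp⟩
    obtain ⟨w, hw⟩ := hA.exists_isRoot hdeg hA0 n.succ_ne_zero
    obtain ⟨B, rfl⟩ := hA.circleFactor_dvd hdeg hw
    obtain ⟨Q, hQdeg, hQ⟩ :=
      ih hA.of_circleFactor_mul (hA.natDegree_le_of_circleFactor_mul hdeg)
    refine ⟨(X - C w) * Q, natDegree_mul_le.trans (by rw [natDegree_X_sub_C]; omega),
      fun z hz => ?_⟩
    rw [eval_mul, pow_succ', ← div_mul_div_comm, eval_circleFactor_div hz, hQ z hz, eval_mul,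
      normSq_mul, ofReal_mul]
    simp

end NonnegOnCircle

theorem Polynomial.natDegree_sum_Icc_le {R : Type*} [Semiring R] (r : ℕ) (c : ℤ → R) :
    (∑ k ∈ Finset.Icc (-(r : ℤ)) r, C (c k) * X ^ (r - k).toNat).natDegree ≤ 2 * r :=
  natDegree_sum_le_of_forall_le _ _ fun k hk =>
    (natDegree_C_mul_X_pow_le _ _).trans (by rw [Finset.mem_Icc] at hk; omega)

theorem Polynomial.eval_sum_Icc_div {K : Type*} [Field K] (r : ℕ) (c : ℤ → K) {z : K}
    (hz : z ≠ 0) :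
    (∑ k ∈ Finset.Icc (-(r : ℤ)) r, C (c k) * X ^ (r - k).toNat).eval z / z ^ r =
      ∑ k ∈ Finset.Icc (-(r : ℤ)) r, c k * z ^ (-k) := by
  rw [eval_finsetSum, Finset.sum_div]
  refine Finset.sum_congr rfl fun k hk => ?_
  rw [Finset.mem_Icc] at hk
  rw [eval_mul, eval_C, eval_pow, eval_X, mul_div_assoc, ← zpow_natCast, ← zpow_natCast,
    Int.toNat_of_nonneg (by omega), ← zpow_sub₀ hz, sub_sub_cancel_left]

theorem Polynomial.sum_range_coeff_mul_zpow {K : Type*} [Field K] {Q : K[X]} {r : ℕ}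
    (hQ : Q.natDegree ≤ r) {z : K} (hz : z ≠ 0) :
    ∑ k ∈ Finset.range (r + 1), Q.coeff (r - k) * z ^ (-(k : ℤ)) = Q.eval z / z ^ r := by
  rw [eval_eq_sum_range' (Nat.lt_succ_of_le hQ), Finset.sum_div, ← Finset.sum_range_reflect]
  refine Finset.sum_congr rfl fun k hk => ?_
  rw [Finset.mem_range] at hk
  rw [Nat.add_sub_cancel, Nat.sub_sub_self (by omega), Nat.cast_sub (by omega), neg_sub,
    mul_div_assoc, ← zpow_natCast, ← zpow_natCast, ← zpow_sub₀ hz]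

theorem fejer_riesz (r : ℕ) (p : ℤ → ℝ)
    (hpos : ∀ z : ℂ, ‖z‖ = 1 → ∃ t : ℝ, 0 ≤ t ∧
      ∑ k ∈ Finset.Icc (-(r : ℤ)) (r : ℤ), (p k : ℂ) * z ^ (-k) = (t : ℂ)) :
    ∃ q : ℕ → ℂ, ∀ z : ℂ, ‖z‖ = 1 →
      ∑ k ∈ Finset.Icc (-(r : ℤ)) (r : ℤ), (p k : ℂ) * z ^ (-k) =
        (∑ k ∈ Finset.range (r + 1), q k * z ^ (-(k : ℤ))) *
          (starRingEnd ℂ) (∑ k ∈ Finset.range (r + 1), q k * z ^ (-(k : ℤ))) := by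
  set A : ℂ[X] := ∑ k ∈ Finset.Icc (-(r : ℤ)) r, C (p k : ℂ) * X ^ (r - k).toNat
  have hP : ∀ z : ℂ, ‖z‖ = 1 →
      A.eval z / z ^ r = ∑ k ∈ Finset.Icc (-(r : ℤ)) r, (p k : ℂ) * z ^ (-k) :=
    fun z hz => eval_sum_Icc_div r _ (ne_zero_of_norm_eq_one hz)
  have hA : NonnegOnCircle r A := fun z hz => by
    obtain ⟨t, ht, hPt⟩ := hpos z hz
    rw [hP z hz, hPt]
    exact zero_le_real.2 ht
  obtain ⟨Q, hQdeg, hQ⟩ := hA.exists_eq_normSq (natDegree_sum_Icc_le r _)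
  refine ⟨fun k => Q.coeff (r - k), fun z hz => ?_⟩
  rw [sum_range_coeff_mul_zpow hQdeg (ne_zero_of_norm_eq_one hz), ← hP z hz, hQ z hz, mul_conj,
    normSq_div, map_pow, normSq_eq_norm_sq z, hz]
  simp
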